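/- Let m = 1 and S = 1, so C₋, C₊ ∈ ℂ^{1×n} are row vectors, and set g = C₋C₋† − C₊C₊† ∈ ℝ (a 1×1 matrix identified with a real number). Suppose the matrix form of the quantum non-demolition commutator condition [L+L*, H] = 0 holds, namely (C₋ + conj(C₊))·Ω₋ = (C₊ + conj(C₋))·Ω₊† and (C₋ + conj(C₊))·Ω₊ = (C₊ + conj(C₋))·Ω₋ᵀ, where conj denotes entrywise complex conjugation. Then for every s ∈ ℂ with sI_{2n} − A invertible and s + g/2 ≠ 0, one has G_qq[s] = (s − g/2)/(s + g/2) and G_qp[s] = 0; in particular, the output quadrature q_out is insensitive to the input quadrature p_in (a unilateral BAE measurement). -/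
import Mathlib


open Matrix

noncomputable section

namespace LQS

/-- Entrywise real part, as a complex matrix. -/
def matRe {k l : ℕ} (X : Matrix (Fin k) (Fin l) ℂ) : Matrix (Fin k) (Fin l) ℂ :=
  fun i j => ((X i j).re : ℂ)

/-- Entrywise imaginary part, as a complex matrix. -/
def matIm {k l : ℕ} (X : Matrix (Fin k) (Fin l) ℂ) : Matrix (Fin k) (Fin l) ℂ :=
  fun i j => ((X i j).im : ℂ)

/-- A complex matrix has real entries. -/
def isReal {k l : ℕ} (X : Matrix (Fin k) (Fin l) ℂ) : Prop := ∀ i j, (X i j).im = 0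

/-- A complex matrix is purely imaginary (every entry has zero real part). -/
def isPurelyImag {k l : ℕ} (X : Matrix (Fin k) (Fin l) ℂ) : Prop := ∀ i j, (X i j).re = 0

/-- The symplectic matrix J_k = [[0, I],[−I, 0]]. -/
def Jmat (k : ℕ) : Matrix (Fin k ⊕ Fin k) (Fin k ⊕ Fin k) ℂ :=
  fromBlocks 0 1 (-1) 0

/-- D = [[Re S, −Im S],[Im S, Re S]]. -/
def quadD {m : ℕ} (S : Matrix (Fin m) (Fin m) ℂ) :
    Matrix (Fin m ⊕ Fin m) (Fin m ⊕ Fin m) ℂ :=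
  fromBlocks (matRe S) (-(matIm S)) (matIm S) (matRe S)

/-- C = [[Re(C₋+C₊), −Im(C₋−C₊)],[Im(C₋+C₊), Re(C₋−C₊)]]. -/
def quadC {m n : ℕ} (Cm Cp : Matrix (Fin m) (Fin n) ℂ) :
    Matrix (Fin m ⊕ Fin m) (Fin n ⊕ Fin n) ℂ :=
  fromBlocks (matRe (Cm + Cp)) (-(matIm (Cm - Cp))) (matIm (Cm + Cp)) (matRe (Cm - Cp))

/-- B = −[[Re((C₋−C₊)†), −Im((C₋−C₊)†)],[Im((C₋+C₊)†), Re((C₋+C₊)†)]]·D. -/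
def quadB {m n : ℕ} (S : Matrix (Fin m) (Fin m) ℂ) (Cm Cp : Matrix (Fin m) (Fin n) ℂ) :
    Matrix (Fin n ⊕ Fin n) (Fin m ⊕ Fin m) ℂ :=
  -(fromBlocks (matRe (Cm - Cp)ᴴ) (-(matIm (Cm - Cp)ᴴ))
      (matIm (Cm + Cp)ᴴ) (matRe (Cm + Cp)ᴴ)) * quadD S

/-- JH = [[Im(Ω₋+Ω₊), Re(Ω₋−Ω₊)],[−Re(Ω₋+Ω₊), Im(Ω₋−Ω₊)]]. -/
def quadJH {n : ℕ} (Om Op : Matrix (Fin n) (Fin n) ℂ) :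
    Matrix (Fin n ⊕ Fin n) (Fin n ⊕ Fin n) ℂ :=
  fromBlocks (matIm (Om + Op)) (matRe (Om - Op)) (-(matRe (Om + Op))) (matIm (Om - Op))

/-- C♯ = −J_n·Cᵀ·J_m. -/
def quadCsharp {m n : ℕ} (Cm Cp : Matrix (Fin m) (Fin n) ℂ) :
    Matrix (Fin n ⊕ Fin n) (Fin m ⊕ Fin m) ℂ :=
  -(Jmat n) * (quadC Cm Cp)ᵀ * (Jmat m)

/-- A = JH − (1/2)·C♯·C. -/
def quadA {m n : ℕ} (Cm Cp : Matrix (Fin m) (Fin n) ℂ) (Om Op : Matrix (Fin n) (Fin n) ℂ) :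
    Matrix (Fin n ⊕ Fin n) (Fin n ⊕ Fin n) ℂ :=
  quadJH Om Op - (1/2 : ℂ) • (quadCsharp Cm Cp * quadC Cm Cp)

/-- Transfer matrix G[s] = D + C(sI − A)⁻¹B. -/
def transferG {m n : ℕ} (S : Matrix (Fin m) (Fin m) ℂ) (Cm Cp : Matrix (Fin m) (Fin n) ℂ)
    (Om Op : Matrix (Fin n) (Fin n) ℂ) (s : ℂ) :
    Matrix (Fin m ⊕ Fin m) (Fin m ⊕ Fin m) ℂ :=
  quadD S + quadC Cm Cp *
    (s • (1 : Matrix (Fin n ⊕ Fin n) (Fin n ⊕ Fin n) ℂ) - quadA Cm Cp Om Op)⁻¹ *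
    quadB S Cm Cp

end LQS

open LQS Matrix

@[simp] lemma matRe_apply {k l : ℕ} (X : Matrix (Fin k) (Fin l) ℂ) (i j) :
    matRe X i j = ((X i j).re : ℂ) := rfl
@[simp] lemma matIm_apply {k l : ℕ} (X : Matrix (Fin k) (Fin l) ℂ) (i j) :
    matIm X i j = ((X i j).im : ℂ) := rfl

lemma quadD_one {m : ℕ} : quadD (1 : Matrix (Fin m) (Fin m) ℂ) = 1 := by
  have h1 : matRe (1 : Matrix (Fin m) (Fin m) ℂ) = 1 := by
    ext i j; by_cases h : i = j <;> simp [Matrix.one_apply, h]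
  have h2 : matIm (1 : Matrix (Fin m) (Fin m) ℂ) = 0 := by
    ext i j; by_cases h : i = j <;> simp [Matrix.one_apply, h]
  rw [quadD, h1, h2]; simp [Matrix.fromBlocks_one]

lemma csharp_eq {m n : ℕ} (Cm Cp : Matrix (Fin m) (Fin n) ℂ) :
    quadCsharp Cm Cp = fromBlocks ((matRe (Cm - Cp))ᵀ) ((matIm (Cm - Cp))ᵀ)
      (-((matIm (Cm + Cp))ᵀ)) ((matRe (Cm + Cp))ᵀ) := by
  rw [quadCsharp, quadC, Jmat, Jmat, Matrix.fromBlocks_transpose]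
  ext (i|i) (k|k) <;>
    simp [Matrix.mul_apply, Fintype.sum_sum_type, Matrix.fromBlocks_apply₁₁,
      Matrix.fromBlocks_apply₁₂, Matrix.fromBlocks_apply₂₁, Matrix.fromBlocks_apply₂₂,
      Matrix.one_apply, Finset.sum_ite_eq, Finset.mul_sum]

lemma quadB_one {n : ℕ} (Cm Cp : Matrix (Fin 1) (Fin n) ℂ) :
    quadB (1 : Matrix (Fin 1) (Fin 1) ℂ) Cm Cp = -quadCsharp Cm Cp := by
  rw [quadB, quadD_one, Matrix.mul_one, csharp_eq]
  congr 1
  ext (i|i) (k|k) <;>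
    (simp [Matrix.conjTranspose_apply, Matrix.fromBlocks_apply₁₁,
      Matrix.fromBlocks_apply₁₂, Matrix.fromBlocks_apply₂₁, Matrix.fromBlocks_apply₂₂]; try ring)



/-- SISO case (m = 1, S = 1): under the matrix form of [L+L*, H] = 0,
G_qq[s] = (s − g/2)/(s + g/2) and G_qp[s] = 0, where
g = C₋C₋† − C₊C₊†. -/
theorem stmt_8 {n : ℕ} (hn : 1 ≤ n)
    (Cm Cp : Matrix (Fin 1) (Fin n) ℂ)
    (Om Op : Matrix (Fin n) (Fin n) ℂ)
    (hOmH : Omᴴ = Om) (hOpS : Opᵀ = Op)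
    (g : ℝ) (hg : (g : ℂ) = (Cm * Cmᴴ - Cp * Cpᴴ) 0 0)
    (hQND1 : (Cm + Cp.map (starRingEnd ℂ)) * Om = (Cp + Cm.map (starRingEnd ℂ)) * Opᴴ)
    (hQND2 : (Cm + Cp.map (starRingEnd ℂ)) * Op = (Cp + Cm.map (starRingEnd ℂ)) * Omᵀ) :
    ∀ s : ℂ,
      IsUnit (s • (1 : Matrix (Fin n ⊕ Fin n) (Fin n ⊕ Fin n) ℂ) - quadA Cm Cp Om Op) →
      s + (g : ℂ)/2 ≠ 0 →
      (transferG (1 : Matrix (Fin 1) (Fin 1) ℂ) Cm Cp Om Op s).toBlocks₁₁ 0 0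
          = (s - (g : ℂ)/2) / (s + (g : ℂ)/2) ∧
      (transferG (1 : Matrix (Fin 1) (Fin 1) ℂ) Cm Cp Om Op s).toBlocks₁₂ = 0 := by
  set E : Matrix (Fin 1) (Fin n) ℂ := Cm + Cp.map (starRingEnd ℂ) with hE
  have hOpc : Opᴴ = Op.map (starRingEnd ℂ) := by
    ext i j
    rw [Matrix.conjTranspose_apply, Matrix.map_apply, ← congrFun (congrFun hOpS i) j]
    rfl
  have hOmc : Omᵀ = Om.map (starRingEnd ℂ) := by
    ext i j
    have h := congrFun (congrFun hOmH i) j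
    rw [Matrix.conjTranspose_apply] at h
    have h2 := congrArg star h
    rw [star_star] at h2
    rw [Matrix.transpose_apply, Matrix.map_apply]
    exact h2
  have hEc : Cp + Cm.map (starRingEnd ℂ) = E.map (starRingEnd ℂ) := by
    ext i j
    simp [hE, Matrix.map_apply, Matrix.add_apply, add_comm]
  have h1' : E * Om = E.map (starRingEnd ℂ) * Op.map (starRingEnd ℂ) := by
    rw [hE, hQND1, hEc, hOpc]
  have h2' : E * Op = E.map (starRingEnd ℂ) * Om.map (starRingEnd ℂ) := by
    rw [hE, hQND2, hEc, hOmc]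
  have hK : E * (Om + Op) = (E * (Om + Op)).map (starRingEnd ℂ) := by
    calc E * (Om + Op) = E.map (starRingEnd ℂ) * Op.map (starRingEnd ℂ)
          + E.map (starRingEnd ℂ) * Om.map (starRingEnd ℂ) := by
            rw [Matrix.mul_add, h1', h2']
      _ = (E * Op).map (starRingEnd ℂ) + (E * Om).map (starRingEnd ℂ) := by
            rw [Matrix.map_mul, Matrix.map_mul]
      _ = (E * (Om + Op)).map (starRingEnd ℂ) := by
            rw [Matrix.mul_add, Matrix.map_add _ (map_add (starRingEnd ℂ)), add_comm]
  have hK' : E * (Om - Op) = -((E * (Om - Op)).map (starRingEnd ℂ)) := by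
    calc E * (Om - Op) = E.map (starRingEnd ℂ) * Op.map (starRingEnd ℂ)
          - E.map (starRingEnd ℂ) * Om.map (starRingEnd ℂ) := by
            rw [Matrix.mul_sub, h1', h2']
      _ = (E * Op).map (starRingEnd ℂ) - (E * Om).map (starRingEnd ℂ) := by
            rw [Matrix.map_mul, Matrix.map_mul]
      _ = -((E * (Om - Op)).map (starRingEnd ℂ)) := by
            rw [Matrix.mul_sub, Matrix.map_sub _ (map_sub (starRingEnd ℂ)), neg_sub]
  have hIm : ∀ j, (∑ i, (((Cm + Cp) 0 i).re * ((Om + Op) i j).im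
      + ((Cm - Cp) 0 i).im * ((Om + Op) i j).re)) = 0 := by
    intro j
    have h := congrFun (congrFun hK 0) j
    rw [Matrix.map_apply] at h
    have h0 : ((E * (Om + Op)) 0 j).im = 0 := Complex.conj_eq_iff_im.mp h.symm
    rw [Matrix.mul_apply, Complex.im_sum] at h0
    rw [← h0]
    refine Finset.sum_congr rfl fun i _ => ?_
    simp only [hE, Matrix.add_apply, Matrix.sub_apply, Matrix.map_apply, Complex.mul_im,
      Complex.add_re, Complex.add_im, Complex.sub_re, Complex.sub_im, Complex.conj_re,
      Complex.conj_im]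
    ring
  have hRe : ∀ j, (∑ i, (((Cm + Cp) 0 i).re * ((Om - Op) i j).re
      - ((Cm - Cp) 0 i).im * ((Om - Op) i j).im)) = 0 := by
    intro j
    have h := congrFun (congrFun hK' 0) j
    have hre := congrArg Complex.re h
    simp only [Matrix.neg_apply, Matrix.map_apply, Complex.neg_re, Complex.conj_re] at hre
    have h0 : ((E * (Om - Op)) 0 j).re = 0 := by linarith
    rw [Matrix.mul_apply, Complex.re_sum] at h0
    rw [← h0]
    refine Finset.sum_congr rfl fun i _ => ?_
    simp only [hE, Matrix.add_apply, Matrix.sub_apply, Matrix.map_apply, Complex.mul_re,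
      Complex.add_re, Complex.add_im, Complex.sub_re, Complex.sub_im, Complex.conj_re,
      Complex.conj_im]
    ring
  have hgsum : (∑ i, (((Cm + Cp) 0 i).re * ((Cm - Cp) 0 i).re
      + ((Cm - Cp) 0 i).im * ((Cm + Cp) 0 i).im)) = g := by
    have h := congrArg Complex.re hg
    rw [Complex.ofReal_re] at h
    rw [h, Matrix.sub_apply, Complex.sub_re, Matrix.mul_apply, Matrix.mul_apply,
      Complex.re_sum, Complex.re_sum, ← Finset.sum_sub_distrib]
    refine Finset.sum_congr rfl fun i _ => ?_
    simp only [Matrix.add_apply, Matrix.sub_apply, Matrix.conjTranspose_apply, Complex.star_def, Complex.mul_re,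
      Complex.add_re, Complex.add_im, Complex.sub_re, Complex.sub_im, Complex.conj_re,
      Complex.conj_im]
    ring
  -- the q-row of quadC as a 1 x 2n matrix
  set r : Matrix (Fin 1) (Fin n ⊕ Fin n) ℂ := fun _ k => quadC Cm Cp (Sum.inl 0) k with hr
  have hrJH : r * quadJH Om Op = 0 := by
    ext x j
    rw [Matrix.mul_apply, Matrix.zero_apply, Fintype.sum_sum_type]
    rcases j with j | j
    · simp only [hr, quadC, quadJH, Matrix.fromBlocks_apply₁₁, Matrix.fromBlocks_apply₁₂,
        Matrix.fromBlocks_apply₂₁, Matrix.fromBlocks_apply₂₂, matRe_apply, matIm_apply,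
        Matrix.neg_apply]
      rw [← Finset.sum_add_distrib]
      have hc : (∑ i : Fin n, ((((Cm + Cp) 0 i).re : ℂ) * (((Om + Op) i j).im : ℂ)
          + (-(((Cm - Cp) 0 i).im : ℂ)) * (-(((Om + Op) i j).re : ℂ))))
          = ((∑ i : Fin n, (((Cm + Cp) 0 i).re * ((Om + Op) i j).im
          + ((Cm - Cp) 0 i).im * ((Om + Op) i j).re) : ℝ) : ℂ) := by
        push_cast
        exact Finset.sum_congr rfl fun i _ => by ring
      rw [hc, hIm j, Complex.ofReal_zero]
    · simp only [hr, quadC, quadJH, Matrix.fromBlocks_apply₁₁, Matrix.fromBlocks_apply₁₂,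
        Matrix.fromBlocks_apply₂₁, Matrix.fromBlocks_apply₂₂, matRe_apply, matIm_apply,
        Matrix.neg_apply]
      rw [← Finset.sum_add_distrib]
      have hc : (∑ i : Fin n, ((((Cm + Cp) 0 i).re : ℂ) * (((Om - Op) i j).re : ℂ)
          + (-(((Cm - Cp) 0 i).im : ℂ)) * (((Om - Op) i j).im : ℂ)))
          = ((∑ i : Fin n, (((Cm + Cp) 0 i).re * ((Om - Op) i j).re
          - ((Cm - Cp) 0 i).im * ((Om - Op) i j).im) : ℝ) : ℂ) := by
        push_cast
        exact Finset.sum_congr rfl fun i _ => by ring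
      rw [hc, hRe j, Complex.ofReal_zero]
  have hrCsl : ∀ x : Fin 1, (r * quadCsharp Cm Cp) x (Sum.inl 0) = (g : ℂ) := by
    intro x
    rw [Matrix.mul_apply, Fintype.sum_sum_type, csharp_eq]
    simp only [hr, quadC, Matrix.fromBlocks_apply₁₁, Matrix.fromBlocks_apply₁₂,
      Matrix.fromBlocks_apply₂₁, Matrix.fromBlocks_apply₂₂, matRe_apply, matIm_apply,
      Matrix.neg_apply, Matrix.transpose_apply]
    rw [← Finset.sum_add_distrib]
    have hc : (∑ i : Fin n, ((((Cm + Cp) 0 i).re : ℂ) * (((Cm - Cp) 0 i).re : ℂ)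
        + (-(((Cm - Cp) 0 i).im : ℂ)) * (-(((Cm + Cp) 0 i).im : ℂ))))
        = ((∑ i : Fin n, (((Cm + Cp) 0 i).re * ((Cm - Cp) 0 i).re
        + ((Cm - Cp) 0 i).im * ((Cm + Cp) 0 i).im) : ℝ) : ℂ) := by
      push_cast
      exact Finset.sum_congr rfl fun i _ => by ring
    rw [hc, hgsum]
  have hrCsr : ∀ (x : Fin 1) (y : Fin 1), (r * quadCsharp Cm Cp) x (Sum.inr y) = 0 := by
    intro x y
    have hy : y = 0 := Subsingleton.elim y 0
    subst hy
    rw [Matrix.mul_apply, Fintype.sum_sum_type, csharp_eq]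
    simp only [hr, quadC, Matrix.fromBlocks_apply₁₁, Matrix.fromBlocks_apply₁₂,
      Matrix.fromBlocks_apply₂₁, Matrix.fromBlocks_apply₂₂, matRe_apply, matIm_apply,
      Matrix.neg_apply, Matrix.transpose_apply]
    rw [← Finset.sum_add_distrib]
    refine Finset.sum_eq_zero fun i _ => by ring
  have hrow : ∀ (X : Matrix (Fin n ⊕ Fin n) (Fin 1 ⊕ Fin 1) ℂ) (x : Fin 1) j,
      (r * X) x j = (r * X) 0 j := fun X x j => rfl
  have hrCsC : r * (quadCsharp Cm Cp * quadC Cm Cp) = (g : ℂ) • r := by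
    rw [← Matrix.mul_assoc]
    ext x j
    rw [Matrix.mul_apply, Fintype.sum_sum_type, Fin.sum_univ_one, Fin.sum_univ_one,
      hrCsl x, hrCsr x 0, zero_mul, add_zero, Matrix.smul_apply, smul_eq_mul]
  have hrA : r * quadA Cm Cp Om Op = (-((g : ℂ)/2)) • r := by
    rw [quadA, Matrix.mul_sub, hrJH, Matrix.mul_smul, hrCsC, smul_smul, zero_sub, ← neg_smul]
    congr 1
    ring
  intro s hM hs
  set M := s • (1 : Matrix (Fin n ⊕ Fin n) (Fin n ⊕ Fin n) ℂ) - quadA Cm Cp Om Op with hMdef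
  have hrM : r * M = (s + (g : ℂ)/2) • r := by
    rw [hMdef, Matrix.mul_sub, Matrix.mul_smul, Matrix.mul_one, hrA, ← sub_smul]
    congr 1
    ring
  have hMM : M * M⁻¹ = 1 := Matrix.mul_nonsing_inv M ((Matrix.isUnit_iff_isUnit_det M).mp hM)
  have hrMinv : r * M⁻¹ = (s + (g : ℂ)/2)⁻¹ • r := by
    have h1 : r * M * M⁻¹ = r := by rw [Matrix.mul_assoc, hMM, Matrix.mul_one]
    rw [hrM, Matrix.smul_mul] at h1
    calc r * M⁻¹ = (s + (g : ℂ)/2)⁻¹ • ((s + (g : ℂ)/2) • (r * M⁻¹)) := by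
          rw [smul_smul, inv_mul_cancel₀ hs, one_smul]
      _ = (s + (g : ℂ)/2)⁻¹ • r := by rw [h1]
  have hrBl : ∀ x, (r * quadB 1 Cm Cp) x (Sum.inl 0) = -(g : ℂ) := by
    intro x
    rw [quadB_one, Matrix.mul_neg, Matrix.neg_apply, hrCsl x]
  have hrBr : ∀ x y, (r * quadB 1 Cm Cp) x (Sum.inr y) = 0 := by
    intro x y
    rw [quadB_one, Matrix.mul_neg, Matrix.neg_apply, hrCsr x y, neg_zero]
  have hCrow : ∀ (X : Matrix (Fin n ⊕ Fin n) (Fin 1 ⊕ Fin 1) ℂ) j,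
      (quadC Cm Cp * X) (Sum.inl 0) j = (r * X) 0 j := fun X j => rfl
  have hG : ∀ j, transferG 1 Cm Cp Om Op s (Sum.inl 0) j
      = (1 : Matrix (Fin 1 ⊕ Fin 1) (Fin 1 ⊕ Fin 1) ℂ) (Sum.inl 0) j
        + (s + (g : ℂ)/2)⁻¹ * (r * quadB 1 Cm Cp) 0 j := by
    intro j
    simp only [transferG]
    rw [← hMdef, quadD_one, Matrix.add_apply, Matrix.mul_assoc, hCrow, ← Matrix.mul_assoc,
      hrMinv, Matrix.smul_mul, Matrix.smul_apply, smul_eq_mul]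
  constructor
  · have hh := hG (Sum.inl 0)
    rw [hrBl 0] at hh
    have hb : (transferG 1 Cm Cp Om Op s).toBlocks₁₁ 0 0
        = transferG 1 Cm Cp Om Op s (Sum.inl 0) (Sum.inl 0) := rfl
    rw [hb, hh, Matrix.one_apply_eq]
    rw [eq_div_iff hs, add_mul, one_mul, mul_comm ((s + (g : ℂ)/2)⁻¹) (-(g : ℂ)), mul_assoc,
      inv_mul_cancel₀ hs, mul_one]
    ring
  · ext x y
    have hx : x = 0 := Subsingleton.elim x 0
    subst hx
    have hh := hG (Sum.inr y)
    rw [hrBr 0 y, mul_zero, add_zero] at hh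
    have hb : (transferG 1 Cm Cp Om Op s).toBlocks₁₂ 0 y
        = transferG 1 Cm Cp Om Op s (Sum.inl 0) (Sum.inr y) := rfl
    rw [Matrix.zero_apply, hb, hh, Matrix.one_apply_ne (by simp)]
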